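/- arXiv:1409.3673 — 2 statements merged into one kernel-verified Lean document; each statement's English description precedes it below -/
import Mathlib

section
/- Let Φ be a positive unital trace-preserving linear map on M_n(ℂ) with Hilbert–Schmidt adjoint Φ*, and D a density matrix with Φ*(Φ(D)) = D. Then S(Φ(D)) = S(D), where S denotes von Neumann entropy. -/
/-!
Write `D = ∑ μᵢ Pᵢ` and `Φ D = ∑ λⱼ Qⱼ` spectrally, with rank-one eigenprojections. For a
positive, unital, trace-preserving `Φ` the matrix `wⱼᵢ = tr (Qⱼ Φ(Pᵢ))` is doubly stochastic
(positivity, unitality and trace preservation give nonnegativity, row sums and column sums)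
and `λ = w μ`, so concavity of `η` gives `S(D) ≤ S(Φ D)`. The Hilbert–Schmidt adjoint `Ψ` of
`Φ` is again positive, unital and trace-preserving, hence
`S(D) ≤ S(Φ D) ≤ S(Ψ (Φ D)) = S(D)`.
-/

open Matrix BigOperators ComplexOrder

/-- Entropy function `η(t) = -t log t` (with `η(0)=0` since `Real.log 0 = 0`). -/
noncomputable def eta (t : ℝ) : ℝ := -(t * Real.log t)

/-- Von Neumann entropy of a matrix: sum of `η` over eigenvalues (0 if not Hermitian). -/
noncomputable def vnEntropy {n : ℕ} (D : Matrix (Fin n) (Fin n) ℂ) : ℝ :=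
  if h : D.IsHermitian then ∑ i, eta (h.eigenvalues i) else 0

/-- Positive, unital, trace-preserving linear map on `M_n(ℂ)`. -/
def IsPUTP {n : ℕ} (Φ : Matrix (Fin n) (Fin n) ℂ →ₗ[ℂ] Matrix (Fin n) (Fin n) ℂ) : Prop :=
  (∀ x, x.PosSemidef → (Φ x).PosSemidef) ∧ Φ 1 = 1 ∧ ∀ x, (Φ x).trace = x.trace

/-- A family of mutually orthogonal rank-one (trace-one) self-adjoint projections
summing to the identity. -/
def IsSpectralFamily {n : ℕ} (e : Fin n → Matrix (Fin n) (Fin n) ℂ) : Prop :=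
  (∀ i, (e i).IsHermitian) ∧ (∀ i j, e i * e j = if i = j then e i else 0) ∧
    (∑ i, e i = 1) ∧ (∀ i, (e i).trace = 1)


namespace Matrix

variable {𝕜 : Type*} [RCLike 𝕜] {m : Type*} [Fintype m]

lemma trace_vecMulVec_star_mul (v : m → 𝕜) (B : Matrix m m 𝕜) :
    (vecMulVec v (star v) * B).trace = star v ⬝ᵥ (B *ᵥ v) := by
  rw [vecMulVec_mul, trace_vecMulVec, dotProduct_comm, dotProduct_mulVec]

variable [DecidableEq m]

lemma mul_diagonal_mul_conjTranspose_eq_sum_vecMulVec (U : Matrix m m 𝕜) (d : m → 𝕜) :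
    U * diagonal d * Uᴴ = ∑ k, d k • vecMulVec (fun i ↦ U i k) (star fun i ↦ U i k) := by
  ext i j
  rw [mul_apply]
  simp [mul_diagonal, vecMulVec_apply, Matrix.sum_apply, mul_assoc, mul_left_comm (d _)]

open scoped MatrixOrder in
lemma PosSemidef.trace_mul_nonneg {A B : Matrix m m 𝕜} (hA : A.PosSemidef) (hB : B.PosSemidef) :
    0 ≤ (A * B).trace := by
  obtain ⟨C, rfl⟩ := CStarAlgebra.nonneg_iff_eq_star_mul_self.mp hB.nonneg
  rw [star_eq_conjTranspose, ← Matrix.mul_assoc, trace_mul_cycle]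
  exact (hA.mul_mul_conjTranspose_same C).trace_nonneg

/-- In `ComplexOrder`, `0 ≤ z` forces `z` to be real, and a complex matrix whose quadratic form
is real-valued is Hermitian. -/
lemma posSemidef_of_forall_dotProduct_mulVec_nonneg {M : Matrix m m ℂ}
    (hM : ∀ x, 0 ≤ star x ⬝ᵥ (M *ᵥ x)) : M.PosSemidef := by
  rw [← isPositive_toEuclideanLin_iff, LinearMap.isPositive_iff_complex]
  intro x
  obtain ⟨hre, him⟩ := Complex.nonneg_iff.mp (hM x)
  have hinner : inner ℂ (toEuclideanLin M x) x = star x.ofLp ⬝ᵥ (M *ᵥ x.ofLp) := by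
    rw [← inner_conj_symm, EuclideanSpace.inner_eq_star_dotProduct, toLpLin_apply,
      dotProduct_comm, Complex.conj_eq_iff_im.mpr him.symm]
  rw [hinner]
  exact ⟨Complex.ext rfl him, hre⟩

namespace IsHermitian

variable {A : Matrix m m 𝕜} (hA : A.IsHermitian)

noncomputable def eigenprojection (i : m) : Matrix m m 𝕜 :=
  vecMulVec (hA.eigenvectorBasis i) (star (hA.eigenvectorBasis i))

lemma posSemidef_eigenprojection (i : m) : (hA.eigenprojection i).PosSemidef :=
  posSemidef_vecMulVec_self_star _

lemma eq_sum_eigenvalues_smul_eigenprojection :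
    A = ∑ i, (hA.eigenvalues i : 𝕜) • hA.eigenprojection i := by
  conv_lhs => rw [hA.spectral_theorem, Unitary.conjStarAlgAut_apply, star_eq_conjTranspose,
    mul_diagonal_mul_conjTranspose_eq_sum_vecMulVec]
  rfl

lemma sum_eigenprojection : ∑ i, hA.eigenprojection i = 1 := by
  have h := mul_diagonal_mul_conjTranspose_eq_sum_vecMulVec
    (hA.eigenvectorUnitary : Matrix m m 𝕜) (fun _ ↦ 1)
  rw [diagonal_one, mul_one, ← star_eq_conjTranspose,
    Unitary.mul_star_self_of_mem hA.eigenvectorUnitary.2] at h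
  simpa [eigenprojection] using h.symm

lemma trace_eigenprojection_mul (i : m) (B : Matrix m m 𝕜) :
    (hA.eigenprojection i * B).trace =
      star ⇑(hA.eigenvectorBasis i) ⬝ᵥ (B *ᵥ hA.eigenvectorBasis i) :=
  trace_vecMulVec_star_mul _ _

lemma trace_eigenprojection (i : m) : (hA.eigenprojection i).trace = 1 := by
  rw [← Matrix.mul_one (hA.eigenprojection i), trace_eigenprojection_mul, one_mulVec,
    dotProduct_comm, ← EuclideanSpace.inner_eq_star_dotProduct,
    hA.eigenvectorBasis.inner_eq_one]

lemma re_trace_eigenprojection_mul_self (i : m) :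
    RCLike.re (hA.eigenprojection i * A).trace = hA.eigenvalues i := by
  rw [trace_eigenprojection_mul, hA.eigenvalues_eq]

end IsHermitian

end Matrix

lemma ConcaveOn.sum_le_sum_mulVec {ι : Type*} [Fintype ι] [DecidableEq ι] {s : Set ℝ}
    {f : ℝ → ℝ} (hf : ConcaveOn ℝ s f) {w : Matrix ι ι ℝ} (hw : w ∈ doublyStochastic ℝ ι)
    {x : ι → ℝ} (hx : ∀ i, x i ∈ s) : ∑ i, f (x i) ≤ ∑ j, f ((w *ᵥ x) j) :=
  calc ∑ i, f (x i) = ∑ i, (∑ j, w j i) * f (x i) := by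
        simp [sum_col_of_mem_doublyStochastic hw]
    _ = ∑ j, ∑ i, w j i • f (x i) := by
        simp only [Finset.sum_mul, smul_eq_mul]
        exact Finset.sum_comm
    _ ≤ ∑ j, f (∑ i, w j i • x i) := Finset.sum_le_sum fun j _ ↦
        hf.le_map_sum (fun i _ ↦ nonneg_of_mem_doublyStochastic hw)
          (sum_row_of_mem_doublyStochastic hw j) fun i _ ↦ hx i
    _ = ∑ j, f ((w *ᵥ x) j) := by simp [mulVec, dotProduct]

section TransitionMatrix

variable {𝕜 : Type*} [RCLike 𝕜] {m : Type*} [Fintype m] [DecidableEq m]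

noncomputable def spectralTransitionMatrix (Θ : Matrix m m 𝕜 →ₗ[𝕜] Matrix m m 𝕜)
    {A B : Matrix m m 𝕜} (hA : A.IsHermitian) (hB : B.IsHermitian) : Matrix m m ℝ :=
  Matrix.of fun j i ↦ RCLike.re (hB.eigenprojection j * Θ (hA.eigenprojection i)).trace

lemma eigenvalues_map_eq_spectralTransitionMatrix_mulVec
    (Θ : Matrix m m 𝕜 →ₗ[𝕜] Matrix m m 𝕜) {A : Matrix m m 𝕜} (hA : A.IsHermitian)
    (hΘA : (Θ A).IsHermitian) :
    hΘA.eigenvalues = spectralTransitionMatrix Θ hA hΘA *ᵥ hA.eigenvalues := by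
  ext j
  have h := congrArg (fun X ↦ RCLike.re (hΘA.eigenprojection j * Θ X).trace)
    hA.eq_sum_eigenvalues_smul_eigenprojection
  rw [← hΘA.re_trace_eigenprojection_mul_self j, h, map_sum, Finset.mul_sum, trace_sum, map_sum]
  refine Finset.sum_congr rfl fun i _ ↦ ?_
  rw [map_smul, Matrix.mul_smul, trace_smul, smul_eq_mul, RCLike.re_ofReal_mul, mul_comm]
  rfl

end TransitionMatrix

section PUTP

variable {n : ℕ}

lemma vnEntropy_eq_sum_negMulLog {D : Matrix (Fin n) (Fin n) ℂ} (hD : D.IsHermitian) :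
    vnEntropy D = ∑ i, Real.negMulLog (hD.eigenvalues i) := by
  simp [vnEntropy, hD, eta, Real.negMulLog, neg_mul]

namespace IsPUTP

variable {Θ : Matrix (Fin n) (Fin n) ℂ →ₗ[ℂ] Matrix (Fin n) (Fin n) ℂ}

lemma spectralTransitionMatrix_mem_doublyStochastic (hΘ : IsPUTP Θ)
    {A B : Matrix (Fin n) (Fin n) ℂ} (hA : A.IsHermitian) (hB : B.IsHermitian) :
    spectralTransitionMatrix Θ hA hB ∈ doublyStochastic ℝ (Fin n) := by
  obtain ⟨hpos, hunital, htrace⟩ := hΘ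
  refine mem_doublyStochastic_iff_sum.mpr ⟨fun j i ↦ ?_, fun j ↦ ?_, fun i ↦ ?_⟩
  · exact (Complex.nonneg_iff.mp <| (hB.posSemidef_eigenprojection j).trace_mul_nonneg
      (hpos _ (hA.posSemidef_eigenprojection i))).1
  · simp only [spectralTransitionMatrix, of_apply]
    rw [← map_sum, ← trace_sum, ← Finset.mul_sum, ← map_sum, hA.sum_eigenprojection, hunital,
      Matrix.mul_one, hB.trace_eigenprojection, RCLike.one_re]
  · simp only [spectralTransitionMatrix, of_apply]
    rw [← map_sum, ← trace_sum, ← Finset.sum_mul, hB.sum_eigenprojection, Matrix.one_mul,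
      htrace, hA.trace_eigenprojection, RCLike.one_re]

theorem vnEntropy_le_vnEntropy_map (hΘ : IsPUTP Θ) {D : Matrix (Fin n) (Fin n) ℂ}
    (hD : D.PosSemidef) : vnEntropy D ≤ vnEntropy (Θ D) := by
  have hΘD := (hΘ.1 D hD).isHermitian
  rw [vnEntropy_eq_sum_negMulLog hD.isHermitian, vnEntropy_eq_sum_negMulLog hΘD,
    eigenvalues_map_eq_spectralTransitionMatrix_mulVec Θ hD.isHermitian hΘD]
  exact Real.concaveOn_negMulLog.sum_le_sum_mulVec
    (hΘ.spectralTransitionMatrix_mem_doublyStochastic _ _) fun i ↦ hD.eigenvalues_nonneg i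

theorem of_trace_adjoint (hΘ : IsPUTP Θ)
    {Ψ : Matrix (Fin n) (Fin n) ℂ →ₗ[ℂ] Matrix (Fin n) (Fin n) ℂ}
    (hadj : ∀ x y : Matrix (Fin n) (Fin n) ℂ, (y * Ψ x).trace = (Θ y * x).trace) :
    IsPUTP Ψ := by
  obtain ⟨hpos, hunital, htrace⟩ := hΘ
  refine ⟨fun x hx ↦ posSemidef_of_forall_dotProduct_mulVec_nonneg fun u ↦ ?_, ?_, fun x ↦ ?_⟩
  · rw [← trace_vecMulVec_star_mul, hadj]
    exact (hpos _ (posSemidef_vecMulVec_self_star u)).trace_mul_nonneg hx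
  · refine ext_iff_trace_mul_left.mpr fun y ↦ ?_
    rw [hadj, Matrix.mul_one, Matrix.mul_one, htrace]
  · simpa [hunital] using hadj x 1

end IsPUTP

end PUTP

theorem stmt_7_general {n : ℕ} (Φ Ψ : Matrix (Fin n) (Fin n) ℂ →ₗ[ℂ] Matrix (Fin n) (Fin n) ℂ)
    (hΦ : IsPUTP Φ)
    (hadj : ∀ x y : Matrix (Fin n) (Fin n) ℂ, (y * Ψ x).trace = (Φ y * x).trace)
    (D : Matrix (Fin n) (Fin n) ℂ) (hD : D.PosSemidef)
    (hfix : Ψ (Φ D) = D) :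
    vnEntropy (Φ D) = vnEntropy D := by
  have hΨ : IsPUTP Ψ := hΦ.of_trace_adjoint hadj
  refine le_antisymm ?_ (hΦ.vnEntropy_le_vnEntropy_map hD)
  simpa only [hfix] using hΨ.vnEntropy_le_vnEntropy_map (hΦ.1 D hD)

theorem stmt_7 {n : ℕ} (Φ Ψ : Matrix (Fin n) (Fin n) ℂ →ₗ[ℂ] Matrix (Fin n) (Fin n) ℂ)
    (hΦ : IsPUTP Φ)
    (hadj : ∀ x y : Matrix (Fin n) (Fin n) ℂ, (y * Ψ x).trace = (Φ y * x).trace)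
    (D : Matrix (Fin n) (Fin n) ℂ) (hD : D.PosSemidef) (htr : D.trace = 1)
    (hfix : Ψ (Φ D) = D) :
    vnEntropy (Φ D) = vnEntropy D :=
  stmt_7_general Φ Ψ hΦ hadj D hD hfix
end

section
/- With D_ρ = Σᵢ λᵢ eᵢ, Φ(D_ρ) = Σⱼ μⱼ pⱼ, b_{ij} = Tr(Φ(eᵢ)pⱼ), define H^λ(b) = Σᵢ λᵢ Σⱼ η(b_{ij}) and S_ρ(Φ) = Σᵢ λᵢ S(Φ(eᵢ)). Then S_ρ(Φ) ≤ H^λ(b) ≤ S(Φ(D_ρ)). -/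
open Matrix BigOperators ComplexOrder

/-!
Conjugating by the eigenvector unitary `U` of a positive semidefinite `A`, the numbers
`c_{jk} = ⟨u_k, p_j u_k⟩` form a doubly stochastic matrix with `Tr(A p_j) = ∑_k c_{jk} λ_k(A)`.
Concavity of `η` then gives `S(A) ≤ ∑_j η(Tr(A p_j))` (pinching raises entropy), which with
`A = Φ(e_i)` is the first inequality. For the second, `μ_j = ∑_i λ_i b_{ij}`, so Jensen's
inequality for `η` in the weights `λ` bounds `H^λ(b)` by `∑_j η(μ_j) = S(Φ(D_ρ))`.
-/

lemma eta_eq_negMulLog : eta = Real.negMulLog := by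
  funext t; simp [eta, Real.negMulLog, neg_mul]

section Eta

variable {ι κ : Type*} [Fintype ι] [Fintype κ]

lemma sum_mul_eta_le_eta_sum_mul {w x : ι → ℝ} (hw : ∀ i, 0 ≤ w i) (hw1 : ∑ i, w i = 1)
    (hx : ∀ i, 0 ≤ x i) : ∑ i, w i * eta (x i) ≤ eta (∑ i, w i * x i) := by
  simpa [eta_eq_negMulLog, smul_eq_mul] using
    Real.concaveOn_negMulLog.le_map_sum (t := Finset.univ) (fun i _ => hw i) hw1 (fun i _ => hx i)

lemma sum_mul_sum_eta_le_sum_eta_sum_mul {w : ι → ℝ} {b : ι → κ → ℝ} (hw : ∀ i, 0 ≤ w i)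
    (hw1 : ∑ i, w i = 1) (hb : ∀ i j, 0 ≤ b i j) :
    ∑ i, w i * ∑ j, eta (b i j) ≤ ∑ j, eta (∑ i, w i * b i j) := by
  simp_rw [Finset.mul_sum]
  rw [Finset.sum_comm]
  exact Finset.sum_le_sum fun j _ => sum_mul_eta_le_eta_sum_mul hw hw1 fun i => hb i j

variable [DecidableEq ι]

lemma sum_eta_le_sum_eta_mulVec {c : Matrix ι ι ℝ} (hc : c ∈ doublyStochastic ℝ ι) {x : ι → ℝ}
    (hx : ∀ k, 0 ≤ x k) : ∑ k, eta (x k) ≤ ∑ j, eta ((c *ᵥ x) j) :=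
  calc ∑ k, eta (x k) = ∑ j, ∑ k, c j k * eta (x k) := by
        rw [Finset.sum_comm]
        simp [← Finset.sum_mul, sum_col_of_mem_doublyStochastic hc]
    _ ≤ ∑ j, eta ((c *ᵥ x) j) := Finset.sum_le_sum fun j _ =>
        sum_mul_eta_le_eta_sum_mul (fun k => nonneg_of_mem_doublyStochastic hc)
          (sum_row_of_mem_doublyStochastic hc j) hx

end Eta

open scoped MatrixOrder in
lemma Matrix.PosSemidef.trace_mul_nonneg_s12 {ι : Type*} [Fintype ι] [DecidableEq ι]
    {A B : Matrix ι ι ℂ} (hA : A.PosSemidef) (hB : B.PosSemidef) : 0 ≤ (A * B).trace := by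
  obtain ⟨C, rfl⟩ := CStarAlgebra.nonneg_iff_eq_star_mul_self.mp hB.nonneg
  rw [← mul_assoc, trace_mul_cycle]
  exact (hA.mul_mul_conjTranspose_same C).trace_nonneg

namespace IsSpectralFamily

variable {n : ℕ} {p : Fin n → Matrix (Fin n) (Fin n) ℂ}

lemma posSemidef (hp : IsSpectralFamily p) (j : Fin n) : (p j).PosSemidef := by
  have h : p j = (p j)ᴴ * p j := by simpa [(hp.1 j).eq] using (hp.2.1 j j).symm
  exact h ▸ posSemidef_conjTranspose_mul_self _

lemma trace_sum_smul (hp : IsSpectralFamily p) (c : Fin n → ℂ) :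
    (∑ i, c i • p i).trace = ∑ i, c i := by
  simp [trace_sum, hp.2.2.2]

lemma trace_sum_smul_mul (hp : IsSpectralFamily p) (c : Fin n → ℂ) (j : Fin n) :
    ((∑ i, c i • p i) * p j).trace = c j := by
  simp [Finset.sum_mul, hp.2.1, hp.2.2.2]

lemma coeff_nonneg_of_posSemidef (hp : IsSpectralFamily p) {μ : Fin n → ℝ}
    (hA : (∑ i, (μ i : ℂ) • p i).PosSemidef) (j : Fin n) : 0 ≤ μ j := by
  have h := hA.trace_mul_nonneg_s12 (hp.posSemidef j)
  rw [hp.trace_sum_smul_mul] at h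
  exact_mod_cast h

end IsSpectralFamily

noncomputable def spectralOverlap {n : ℕ} (U : Matrix (Fin n) (Fin n) ℂ)
    (p : Fin n → Matrix (Fin n) (Fin n) ℂ) : Matrix (Fin n) (Fin n) ℝ :=
  fun j k => ((star U * p j * U) k k).re

section SpectralOverlap

variable {n : ℕ} {U : Matrix (Fin n) (Fin n) ℂ} {p : Fin n → Matrix (Fin n) (Fin n) ℂ}

lemma spectralOverlap_mem_doublyStochastic (hU : U ∈ unitaryGroup (Fin n) ℂ)
    (hp : IsSpectralFamily p) : spectralOverlap U p ∈ doublyStochastic ℝ (Fin n) := by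
  have hUU : U * star U = 1 := mem_unitaryGroup_iff.mp hU
  have hUU' : star U * U = 1 := mem_unitaryGroup_iff'.mp hU
  have hM (j : Fin n) : (star U * p j * U).PosSemidef := by
    simpa [star_eq_conjTranspose] using (hp.posSemidef j).conjTranspose_mul_mul_same U
  rw [mem_doublyStochastic_iff_sum]
  refine ⟨fun j k => (RCLike.nonneg_iff.mp (hM j).diag_nonneg).1, fun j => ?_, fun k => ?_⟩
  · have htr : (star U * p j * U).trace = 1 := by
      rw [trace_mul_cycle, hUU, one_mul, hp.2.2.2]
    simpa [spectralOverlap, trace, Complex.re_sum] using congrArg Complex.re htr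
  · have hsum : ∑ j, star U * p j * U = 1 := by
      rw [← Finset.sum_mul, ← Finset.mul_sum, hp.2.2.1, mul_one, hUU']
    simpa [spectralOverlap, Matrix.sum_apply, Complex.re_sum] using
      congrArg (fun M => (M k k).re) hsum

end SpectralOverlap

namespace Matrix.IsHermitian

variable {n : ℕ} {A : Matrix (Fin n) (Fin n) ℂ}

lemma star_eigenvectorUnitary_mul_mul_eigenvectorUnitary (hA : A.IsHermitian) :
    star (hA.eigenvectorUnitary : Matrix (Fin n) (Fin n) ℂ) * A *
      (hA.eigenvectorUnitary : Matrix (Fin n) (Fin n) ℂ) =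
      diagonal (RCLike.ofReal ∘ hA.eigenvalues) := by
  simpa [Unitary.conjStarAlgAut_apply] using hA.conjStarAlgAut_star_eigenvectorUnitary

lemma re_trace_mul_eq_spectralOverlap_mulVec (hA : A.IsHermitian)
    (p : Fin n → Matrix (Fin n) (Fin n) ℂ) (j : Fin n) :
    (A * p j).trace.re = (spectralOverlap hA.eigenvectorUnitary p *ᵥ hA.eigenvalues) j := by
  set U : Matrix (Fin n) (Fin n) ℂ := (hA.eigenvectorUnitary : Matrix (Fin n) (Fin n) ℂ)
  have hUU : U * star U = 1 := mem_unitaryGroup_iff.mp hA.eigenvectorUnitary.2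
  have htr : (A * p j).trace = (star U * A * U * (star U * p j * U)).trace :=
    calc (A * p j).trace = (U * (star U * (A * p j))).trace := by rw [← mul_assoc, hUU, one_mul]
      _ = (star U * (A * p j) * U).trace := trace_mul_comm _ _
      _ = (star U * A * U * (star U * p j * U)).trace := by
        simp only [mul_assoc]
        rw [← mul_assoc U (star U), hUU, one_mul]
  rw [htr, hA.star_eigenvectorUnitary_mul_mul_eigenvectorUnitary]
  simp [trace, diagonal_mul, mulVec, dotProduct, spectralOverlap, Complex.re_sum, mul_comm]

lemma eigenvalues_eq_vecMul_spectralOverlap (hA : A.IsHermitian)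
    {p : Fin n → Matrix (Fin n) (Fin n) ℂ} {μ : Fin n → ℝ} (hdec : A = ∑ j, (μ j : ℂ) • p j) :
    hA.eigenvalues = μ ᵥ* spectralOverlap hA.eigenvectorUnitary p := by
  funext k
  have h := congrArg (fun M : Matrix (Fin n) (Fin n) ℂ => (M k k).re)
    hA.star_eigenvectorUnitary_mul_mul_eigenvectorUnitary
  generalize (hA.eigenvectorUnitary : Matrix (Fin n) (Fin n) ℂ) = U at h ⊢
  generalize hA.eigenvalues = ev at h ⊢
  subst hdec
  simpa [Finset.mul_sum, Finset.sum_mul, Matrix.sum_apply, Complex.re_sum, vecMul, dotProduct,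
    spectralOverlap] using h.symm

end Matrix.IsHermitian

section VonNeumannEntropy

variable {n : ℕ} {p : Fin n → Matrix (Fin n) (Fin n) ℂ}

lemma vnEntropy_le_sum_eta_re_trace_mul {A : Matrix (Fin n) (Fin n) ℂ} (hA : A.PosSemidef)
    (hp : IsSpectralFamily p) : vnEntropy A ≤ ∑ j, eta ((A * p j).trace.re) := by
  rw [vnEntropy, dif_pos hA.1]
  simp_rw [hA.1.re_trace_mul_eq_spectralOverlap_mulVec p]
  exact sum_eta_le_sum_eta_mulVec
    (spectralOverlap_mem_doublyStochastic hA.1.eigenvectorUnitary.2 hp) hA.eigenvalues_nonneg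

/-- The eigenvalues `λ` of `A = ∑ μ_j p_j` and the weights `μ` are each the image of the other
under a doubly stochastic matrix, so each entropy dominates the other. -/
lemma vnEntropy_sum_smul (hp : IsSpectralFamily p) {μ : Fin n → ℝ} (hμ : ∀ j, 0 ≤ μ j) :
    vnEntropy (∑ j, (μ j : ℂ) • p j) = ∑ j, eta (μ j) := by
  have hA : (∑ j, (μ j : ℂ) • p j).IsHermitian :=
    isSelfAdjoint_sum _ fun j _ => (hp.1 j).smul (Complex.conj_ofReal (μ j))
  set c := spectralOverlap hA.eigenvectorUnitary p
  have hc : c ∈ doublyStochastic ℝ (Fin n) :=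
    spectralOverlap_mem_doublyStochastic hA.eigenvectorUnitary.2 hp
  have hev : hA.eigenvalues = μ ᵥ* c := hA.eigenvalues_eq_vecMul_spectralOverlap rfl
  have hev_nonneg (k : Fin n) : 0 ≤ hA.eigenvalues k := by
    rw [hev, vecMul, dotProduct]
    exact Finset.sum_nonneg fun j _ => mul_nonneg (hμ j) (nonneg_of_mem_doublyStochastic hc)
  have hμ_eq : c *ᵥ hA.eigenvalues = μ := funext fun j => by
    rw [← hA.re_trace_mul_eq_spectralOverlap_mulVec, hp.trace_sum_smul_mul, Complex.ofReal_re]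
  rw [vnEntropy, dif_pos hA]
  apply le_antisymm
  · simpa [hμ_eq] using sum_eta_le_sum_eta_mulVec hc hev_nonneg
  · simpa [hev, mulVec_transpose] using
      sum_eta_le_sum_eta_mulVec (transpose_mem_doublyStochastic_iff.mpr hc) hμ

end VonNeumannEntropy

theorem stmt_12 {n : ℕ} (Φ : Matrix (Fin n) (Fin n) ℂ →ₗ[ℂ] Matrix (Fin n) (Fin n) ℂ)
    (hΦ : IsPUTP Φ)
    (D : Matrix (Fin n) (Fin n) ℂ) (hD : D.PosSemidef) (htr : D.trace = 1)
    (lam mu : Fin n → ℝ) (e p : Fin n → Matrix (Fin n) (Fin n) ℂ)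
    (he : IsSpectralFamily e) (hp : IsSpectralFamily p)
    (hDdec : D = ∑ i, (lam i : ℂ) • e i)
    (hΦDdec : Φ D = ∑ j, (mu j : ℂ) • p j)
    (b : Fin n → Fin n → ℝ)
    (hb : ∀ i j, (b i j : ℂ) = (Φ (e i) * p j).trace) :
    (∑ i, lam i * vnEntropy (Φ (e i))) ≤ (∑ i, lam i * ∑ j, eta (b i j)) ∧
    (∑ i, lam i * ∑ j, eta (b i j)) ≤ vnEntropy (Φ D) := by
  have hΦe (i : Fin n) : (Φ (e i)).PosSemidef := hΦ.1 _ (he.posSemidef i)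
  have hb_re (i j : Fin n) : b i j = (Φ (e i) * p j).trace.re := by rw [← hb, Complex.ofReal_re]
  have hb_nonneg (i j : Fin n) : 0 ≤ b i j := by
    exact_mod_cast (hb i j).symm ▸ (hΦe i).trace_mul_nonneg_s12 (hp.posSemidef j)
  have hlam_nonneg : ∀ i, 0 ≤ lam i := he.coeff_nonneg_of_posSemidef (hDdec ▸ hD)
  have hmu_nonneg : ∀ j, 0 ≤ mu j := hp.coeff_nonneg_of_posSemidef (hΦDdec ▸ hΦ.1 D hD)
  have hlam_sum : ∑ i, lam i = 1 := by
    exact_mod_cast (he.trace_sum_smul _).symm.trans (hDdec ▸ htr)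
  have hmu (j : Fin n) : mu j = ∑ i, lam i * b i j := by
    have h := hp.trace_sum_smul_mul (fun j => (mu j : ℂ)) j
    rw [← hΦDdec, hDdec, map_sum, Finset.sum_mul, trace_sum] at h
    simp only [map_smul, smul_mul, trace_smul, smul_eq_mul, ← hb] at h
    exact_mod_cast h.symm
  constructor
  · gcongr with i
    · exact hlam_nonneg i
    · simpa only [hb_re] using vnEntropy_le_sum_eta_re_trace_mul (hΦe i) hp
  · calc ∑ i, lam i * ∑ j, eta (b i j) ≤ ∑ j, eta (∑ i, lam i * b i j) :=
          sum_mul_sum_eta_le_sum_eta_sum_mul hlam_nonneg hlam_sum hb_nonneg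
      _ = vnEntropy (Φ D) := by simp only [← hmu, hΦDdec, vnEntropy_sum_smul hp hmu_nonneg]
end
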